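/- (Key strict inequality for Theorem 3.8.) Let Φ be a (sub)critical branching mechanism (α ≥ 0) with Lévy measure π, and let 0 < r < r' < ∞ be such that π((r,r')) > 0. Then Φ satisfies Assumption H0 with largest root q = 0, the inverses (Φ^{(r,∞)})^{−1} and (Φ^{[r',∞)})^{−1} are well-defined on [0,∞), and (Φ^{(r,∞)})^{−1}(π((r,∞))) > (Φ^{[r',∞)})^{−1}(π([r',∞))). -/

import Mathlib

open MeasureTheory Filter Set

/-- The branching mechanism `Φ(λ) = αλ + βλ² + ∫_{(0,∞)} (e^{-λθ} - 1 + λθ) π(dθ)`. -/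
noncomputable def Phi (α β : ℝ) (π : Measure ℝ) (lam : ℝ) : ℝ :=
  α * lam + β * lam ^ 2 + ∫ θ, (Real.exp (-lam * θ) - 1 + lam * θ) ∂π

/-- The `(r,∞)`-truncated branching mechanism
`Φ^{(r,∞)}(λ) = Φ(λ) + ∫_{(r,∞)} (1 - e^{-λθ}) π(dθ)`. -/
noncomputable def PhiIoi (α β : ℝ) (π : Measure ℝ) (r lam : ℝ) : ℝ :=
  Phi α β π lam + ∫ θ in Set.Ioi r, (1 - Real.exp (-lam * θ)) ∂π

/-- The `[r,∞)`-truncated branching mechanism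
`Φ^{[r,∞)}(λ) = Φ(λ) + ∫_{[r,∞)} (1 - e^{-λθ}) π(dθ)`. -/
noncomputable def PhiIci (α β : ℝ) (π : Measure ℝ) (r lam : ℝ) : ℝ :=
  Phi α β π lam + ∫ θ in Set.Ici r, (1 - Real.exp (-lam * θ)) ∂π

/-! For `π(S) < ∞` the truncated mechanism `Φ^S(λ) = Φ(λ) + ∫_S (1 - e^{-λθ}) π(dθ)` vanishes
at `0`, is continuous on `[0,∞)`, tends to `∞`, and is strictly increasing there because
`λ ↦ e^{-λθ} - 1 + λθ` is strictly increasing for each `θ > 0` and `π ≠ 0`; so it is a bijection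
of `[0,∞)`.
Splitting `(r,∞) = (r,r') ∪ [r',∞)` gives
`Φ^{(r,∞)}(b) = Φ^{[r',∞)}(b) + ∫_{(r,r')} (1 - e^{-bθ}) π(dθ)`, and the last integral is strictly
smaller than `π((r,r'))` as soon as `π((r,r')) > 0`. At `b = b₂` this reads
`Φ^{(r,∞)}(b₂) < π([r',∞)) + π((r,r')) = π((r,∞)) = Φ^{(r,∞)}(b₁)`, whence `b₂ < b₁`. -/

lemma exp_neg_sub_one_add_le_min_sq {x : ℝ} (hx : 0 ≤ x) :
    Real.exp (-x) - 1 + x ≤ min x (x ^ 2) := by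
  have hexp : Real.exp (-x) ≤ 1 := Real.exp_le_one_iff.2 (neg_nonpos.2 hx)
  have hx2 : Real.exp (-x) ≤ 1 - x + x ^ 2 := by
    have := Real.add_one_le_exp x
    have hprod : Real.exp (-x) * Real.exp x = 1 := by
      rw [← Real.exp_add, neg_add_cancel, Real.exp_zero]
    nlinarith [Real.exp_pos (-x), mul_nonneg hx (mul_nonneg hx hx)]
  exact le_min (by linarith) (by linarith)

lemma strictMonoOn_exp_neg_sub_one_add :
    StrictMonoOn (fun x : ℝ => Real.exp (-x) - 1 + x) (Ici 0) := by
  intro x hx y _ hxy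
  -- `e^{-x} - e^{-y} = e^{-x} (1 - e^{-(y-x)}) < y - x`
  have hsplit : Real.exp (-y) = Real.exp (-x) * Real.exp (-(y - x)) := by
    rw [← Real.exp_add]; ring_nf
  have hexp : Real.exp (-x) ≤ 1 := Real.exp_le_one_iff.2 (neg_nonpos.2 hx)
  have hgap : 1 - (y - x) < Real.exp (-(y - x)) := Real.one_sub_lt_exp_neg (by linarith)
  have hle : Real.exp (-(y - x)) ≤ 1 := Real.exp_le_one_iff.2 (by linarith)
  nlinarith [Real.exp_pos (-x)]

lemma existsUnique_eq_of_strictMonoOn_Ici {g : ℝ → ℝ} {c a : ℝ}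
    (hcont : ContinuousOn g (Ici c)) (hmono : StrictMonoOn g (Ici c))
    (htop : Tendsto g atTop atTop) (ha : g c ≤ a) :
    ∃! b, c ≤ b ∧ g b = a := by
  obtain ⟨L, haL, hcL⟩ := ((htop.eventually_ge_atTop a).and (eventually_ge_atTop c)).exists
  obtain ⟨b, hb, hgb⟩ := intermediate_value_Icc hcL (hcont.mono Icc_subset_Ici_self) ⟨ha, haL⟩
  exact ⟨b, ⟨hb.1, hgb⟩, fun b' hb' => hmono.injOn hb'.1 hb.1 (hb'.2.trans hgb.symm)⟩

lemma continuousOn_integral_of_monotoneOn {X : Type*} [MeasurableSpace X] {μ : Measure X}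
    {f : ℝ → X → ℝ} (hcont : ∀ x, Continuous (f · x))
    (hmono : ∀ᵐ x ∂μ, 0 ≤ f 0 x ∧ MonotoneOn (f · x) (Ici 0))
    (hint : ∀ l, 0 ≤ l → Integrable (f l) μ) :
    ContinuousOn (fun l => ∫ x, f l x ∂μ) (Ici 0) := by
  intro l₀ hl₀
  -- dominate by `f (l₀ + 1)` on the neighbourhood `[0, l₀ + 1)` of `l₀`
  refine continuousWithinAt_of_dominated (bound := f (l₀ + 1)) ?_ ?_
    (hint _ (by linarith [mem_Ici.1 hl₀])) (ae_of_all _ fun x => (hcont x).continuousWithinAt)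
  · filter_upwards [self_mem_nhdsWithin] with l hl using (hint l hl).aestronglyMeasurable
  · filter_upwards [self_mem_nhdsWithin,
      nhdsWithin_le_nhds (Iio_mem_nhds (lt_add_one l₀))] with l hl hl'
    filter_upwards [hmono] with x ⟨h0, hx⟩
    rw [Real.norm_of_nonneg (h0.trans (hx self_mem_Ici hl hl))]
    exact hx hl (mem_Ici.2 (by linarith [mem_Ici.1 hl₀])) (le_of_lt hl')

lemma integral_lt_integral_of_ae_lt {X : Type*} [MeasurableSpace X] {μ : Measure X} [NeZero μ]
    {f g : X → ℝ} (hf : Integrable f μ) (hg : Integrable g μ) (hfg : ∀ᵐ x ∂μ, f x < g x) :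
    ∫ x, f x ∂μ < ∫ x, g x ∂μ := by
  rw [← sub_pos, ← integral_sub hg hf,
    integral_pos_iff_support_of_nonneg_ae (hfg.mono fun x h => (sub_pos.2 h).le) (hg.sub hf)]
  refine pos_iff_ne_zero.2 fun h => ?_
  have : (ae μ).NeBot := ae_neBot.2 (NeZero.ne μ)
  obtain ⟨x, hx, hlt⟩ := ((measure_eq_zero_iff_ae_notMem.1 h).and hfg).exists
  exact hx (sub_ne_zero.2 hlt.ne')

lemma setIntegral_one_sub_exp_lt {X : Type*} [MeasurableSpace X] {μ : Measure X} {A : Set X}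
    {f : X → ℝ} (hA₀ : μ A ≠ 0) (hA : μ A ≠ ⊤)
    (hf : IntegrableOn (fun x => 1 - Real.exp (f x)) A μ) :
    ∫ x in A, (1 - Real.exp (f x)) ∂μ < (μ A).toReal := by
  have : NeZero (μ.restrict A) := ⟨Measure.restrict_eq_zero.not.2 hA₀⟩
  have hone : IntegrableOn (fun _ => (1 : ℝ)) A μ := integrableOn_const hA
  have hexp : IntegrableOn (fun x => Real.exp (f x)) A μ := by
    convert hone.sub hf using 1
    ext x
    simp
  rw [integral_sub hone hexp, setIntegral_const, smul_eq_mul, mul_one, measureReal_def]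
  linarith [integral_exp_pos hexp]

section BranchingMechanism

variable {α β : ℝ} {π : Measure ℝ}

@[simp] lemma Phi_zero : Phi α β π 0 = 0 := by simp [Phi]

lemma ae_pos_of_measure_Iic_zero (hsupp : π (Iic 0) = 0) : ∀ᵐ θ ∂π, 0 < θ :=
  ae_iff.2 (measure_mono_null (fun _ hθ => not_lt.1 hθ) hsupp)

lemma measure_Ioi_ne_top_of_integrable_min_sq (hint : Integrable (fun θ => min θ (θ ^ 2)) π)
    {s : ℝ} (hs : 0 < s) : π (Ioi s) ≠ ⊤ := by
  refine ne_top_of_le_ne_top (hint.measure_ge_lt_top (ε := min s (s ^ 2)) (by positivity)).ne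
    (measure_mono fun θ (hθ : s < θ) => ?_)
  exact min_le_min hθ.le (pow_le_pow_left₀ hs.le hθ.le 2)

lemma strictMonoOn_exp_neg_mul_sub_one_add_mul {θ : ℝ} (hθ : 0 < θ) :
    StrictMonoOn (fun l => Real.exp (-l * θ) - 1 + l * θ) (Ici 0) := by
  intro b hb b' hb' hbb'
  simpa only [neg_mul] using strictMonoOn_exp_neg_sub_one_add (mul_nonneg hb hθ.le)
    (mul_nonneg hb' hθ.le) (mul_lt_mul_of_pos_right hbb' hθ)

lemma monotone_one_sub_exp_neg_mul {θ : ℝ} (hθ : 0 ≤ θ) :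
    Monotone fun l => 1 - Real.exp (-l * θ) := by
  intro b b' hbb'
  exact sub_le_sub_left (Real.exp_le_exp.2 (by nlinarith)) 1

lemma integrable_exp_neg_mul_sub_one_add_mul (hsupp : π (Iic 0) = 0)
    (hint : Integrable (fun θ => min θ (θ ^ 2)) π) {l : ℝ} (hl : 0 ≤ l) :
    Integrable (fun θ => Real.exp (-l * θ) - 1 + l * θ) π := by
  refine (hint.const_mul (max l (l ^ 2))).mono' (by fun_prop : Continuous _).aestronglyMeasurable ?_
  filter_upwards [ae_pos_of_measure_Iic_zero hsupp] with θ hθ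
  have hlθ : 0 ≤ l * θ := mul_nonneg hl hθ.le
  rw [neg_mul, Real.norm_of_nonneg (by linarith [Real.add_one_le_exp (-(l * θ))])]
  calc _ ≤ min (l * θ) ((l * θ) ^ 2) := exp_neg_sub_one_add_le_min_sq hlθ
    _ ≤ min (max l (l ^ 2) * θ) (max l (l ^ 2) * θ ^ 2) := by
        rw [mul_pow]
        exact min_le_min (by gcongr; exact le_max_left _ _) (by gcongr; exact le_max_right _ _)
    _ = max l (l ^ 2) * min θ (θ ^ 2) := (mul_min_of_nonneg _ _ (by positivity)).symm

lemma integrableOn_one_sub_exp_neg_mul (hsupp : π (Iic 0) = 0) {S : Set ℝ} (hS : π S ≠ ⊤)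
    {l : ℝ} (hl : 0 ≤ l) : IntegrableOn (fun θ => 1 - Real.exp (-l * θ)) S π := by
  refine (integrableOn_const hS : IntegrableOn (fun _ => (1 : ℝ)) S π).mono'
    (by fun_prop : Continuous _).aestronglyMeasurable ?_
  filter_upwards [ae_restrict_of_ae (ae_pos_of_measure_Iic_zero hsupp)] with θ hθ
  have hexp : Real.exp (-l * θ) ≤ 1 := Real.exp_le_one_iff.2 (by nlinarith)
  rw [Real.norm_of_nonneg (by linarith)]
  linarith [Real.exp_pos (-l * θ)]

lemma strictMonoOn_Phi (hα : 0 ≤ α) (hβ : 0 ≤ β) (hsupp : π (Iic 0) = 0)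
    (hint : Integrable (fun θ => min θ (θ ^ 2)) π) [NeZero π] :
    StrictMonoOn (Phi α β π) (Ici 0) := by
  intro b hb b' hb' hbb'
  have hintegral : ∫ θ, (Real.exp (-b * θ) - 1 + b * θ) ∂π
      < ∫ θ, (Real.exp (-b' * θ) - 1 + b' * θ) ∂π := by
    refine integral_lt_integral_of_ae_lt (integrable_exp_neg_mul_sub_one_add_mul hsupp hint hb)
      (integrable_exp_neg_mul_sub_one_add_mul hsupp hint hb') ?_
    filter_upwards [ae_pos_of_measure_Iic_zero hsupp] with θ hθ
    exact strictMonoOn_exp_neg_mul_sub_one_add_mul hθ hb hb' hbb'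
  have hlin : α * b ≤ α * b' := mul_le_mul_of_nonneg_left hbb'.le hα
  have hsq : β * b ^ 2 ≤ β * b' ^ 2 := mul_le_mul_of_nonneg_left (pow_le_pow_left₀ hb hbb'.le 2) hβ
  unfold Phi
  linarith

lemma continuousOn_Phi (hsupp : π (Iic 0) = 0) (hint : Integrable (fun θ => min θ (θ ^ 2)) π) :
    ContinuousOn (Phi α β π) (Ici 0) := by
  refine (by fun_prop : Continuous fun l : ℝ => α * l + β * l ^ 2).continuousOn.add
    (continuousOn_integral_of_monotoneOn (fun θ => by fun_prop) ?_
      fun l hl => integrable_exp_neg_mul_sub_one_add_mul hsupp hint hl)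
  filter_upwards [ae_pos_of_measure_Iic_zero hsupp] with θ hθ
  exact ⟨by simp, (strictMonoOn_exp_neg_mul_sub_one_add_mul hθ).monotoneOn⟩

lemma tendsto_Phi_atTop (hα : 0 ≤ α) (hβ : 0 ≤ β) (hsupp : π (Iic 0) = 0)
    (hint : Integrable (fun θ => min θ (θ ^ 2)) π) {s : ℝ} (hs : 0 < s) (hπs : 0 < π (Ioi s)) :
    Tendsto (Phi α β π) atTop atTop := by
  have hfin := measure_Ioi_ne_top_of_integrable_min_sq hint hs
  have hm : 0 < π.real (Ioi s) := ENNReal.toReal_pos hπs.ne' hfin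
  have hlower : ∀ l, 0 ≤ l → (l * s - 1) * π.real (Ioi s) ≤ Phi α β π l := by
    intro l hl
    have hF := integrable_exp_neg_mul_sub_one_add_mul hsupp hint hl
    calc (l * s - 1) * π.real (Ioi s)
        ≤ ∫ θ in Ioi s, (Real.exp (-l * θ) - 1 + l * θ) ∂π := by
          refine setIntegral_ge_of_const_le_real measurableSet_Ioi hfin (fun θ hθ => ?_)
            hF.integrableOn
          have : l * s ≤ l * θ := mul_le_mul_of_nonneg_left (le_of_lt hθ) hl
          linarith [Real.exp_pos (-l * θ)]
      _ ≤ ∫ θ, (Real.exp (-l * θ) - 1 + l * θ) ∂π := by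
          refine setIntegral_le_integral hF ?_
          filter_upwards [ae_pos_of_measure_Iic_zero hsupp] with θ hθ
          simpa using (strictMonoOn_exp_neg_mul_sub_one_add_mul hθ).monotoneOn self_mem_Ici hl hl
      _ ≤ Phi α β π l := by
          have : 0 ≤ α * l + β * l ^ 2 := by positivity
          unfold Phi
          linarith
  refine tendsto_atTop_mono' _ ((eventually_ge_atTop 0).mono hlower) ?_
  simpa only [sub_eq_add_neg, id] using
    (tendsto_atTop_add_const_right _ (-1) (tendsto_id.atTop_mul_const hs)).atTop_mul_const hm

variable {S : Set ℝ}

lemma monotoneOn_setIntegral_one_sub_exp_neg_mul (hsupp : π (Iic 0) = 0) (hS : π S ≠ ⊤) :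
    MonotoneOn (fun l => ∫ θ in S, (1 - Real.exp (-l * θ)) ∂π) (Ici 0) := by
  intro b hb b' hb' hbb'
  refine integral_mono_ae (integrableOn_one_sub_exp_neg_mul hsupp hS hb)
    (integrableOn_one_sub_exp_neg_mul hsupp hS hb') ?_
  filter_upwards [ae_restrict_of_ae (ae_pos_of_measure_Iic_zero hsupp)] with θ hθ
  exact monotone_one_sub_exp_neg_mul hθ.le hbb'

lemma continuousOn_setIntegral_one_sub_exp_neg_mul (hsupp : π (Iic 0) = 0) (hS : π S ≠ ⊤) :
    ContinuousOn (fun l => ∫ θ in S, (1 - Real.exp (-l * θ)) ∂π) (Ici 0) := by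
  refine continuousOn_integral_of_monotoneOn (fun θ => by fun_prop) ?_
    fun l hl => integrableOn_one_sub_exp_neg_mul hsupp hS hl
  filter_upwards [ae_restrict_of_ae (ae_pos_of_measure_Iic_zero hsupp)] with θ hθ
  exact ⟨by simp, (monotone_one_sub_exp_neg_mul hθ.le).monotoneOn _⟩

noncomputable def truncatedPhi (α β : ℝ) (π : Measure ℝ) (S : Set ℝ) (lam : ℝ) : ℝ :=
  Phi α β π lam + ∫ θ in S, (1 - Real.exp (-lam * θ)) ∂π

@[simp] lemma truncatedPhi_zero : truncatedPhi α β π S 0 = 0 := by simp [truncatedPhi]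

lemma PhiIoi_eq_truncatedPhi (r : ℝ) : PhiIoi α β π r = truncatedPhi α β π (Ioi r) := rfl

lemma PhiIci_eq_truncatedPhi (r : ℝ) : PhiIci α β π r = truncatedPhi α β π (Ici r) := rfl

lemma strictMonoOn_truncatedPhi (hα : 0 ≤ α) (hβ : 0 ≤ β) (hsupp : π (Iic 0) = 0)
    (hint : Integrable (fun θ => min θ (θ ^ 2)) π) [NeZero π] (hS : π S ≠ ⊤) :
    StrictMonoOn (truncatedPhi α β π S) (Ici 0) := fun _ hb _ hb' hbb' =>
  add_lt_add_of_lt_of_le (strictMonoOn_Phi hα hβ hsupp hint hb hb' hbb')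
    (monotoneOn_setIntegral_one_sub_exp_neg_mul hsupp hS hb hb' hbb'.le)

lemma existsUnique_truncatedPhi_eq (hα : 0 ≤ α) (hβ : 0 ≤ β) (hsupp : π (Iic 0) = 0)
    (hint : Integrable (fun θ => min θ (θ ^ 2)) π) {s : ℝ} (hs : 0 < s) (hπs : 0 < π (Ioi s))
    (hS : π S ≠ ⊤) {a : ℝ} (ha : 0 ≤ a) :
    ∃! b, 0 ≤ b ∧ truncatedPhi α β π S b = a := by
  have : NeZero π := ⟨fun h => by simp [h] at hπs⟩
  have hPhi_le : ∀ l, 0 ≤ l → Phi α β π l ≤ truncatedPhi α β π S l := fun l hl =>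
    le_add_of_nonneg_right <| by
      simpa using monotoneOn_setIntegral_one_sub_exp_neg_mul hsupp hS self_mem_Ici hl hl
  refine existsUnique_eq_of_strictMonoOn_Ici
    ((continuousOn_Phi hsupp hint).add (continuousOn_setIntegral_one_sub_exp_neg_mul hsupp hS))
    (strictMonoOn_truncatedPhi hα hβ hsupp hint hS)
    (tendsto_atTop_mono' _ ((eventually_ge_atTop 0).mono hPhi_le)
      (tendsto_Phi_atTop hα hβ hsupp hint hs hπs)) (by simpa using ha)

lemma truncatedPhi_union (hsupp : π (Iic 0) = 0) {A B : Set ℝ} (hAB : Disjoint A B)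
    (hB : MeasurableSet B) (hA : π A ≠ ⊤) (hB' : π B ≠ ⊤) {b : ℝ} (hb : 0 ≤ b) :
    truncatedPhi α β π (A ∪ B) b
      = truncatedPhi α β π B b + ∫ θ in A, (1 - Real.exp (-b * θ)) ∂π := by
  rw [truncatedPhi, truncatedPhi, setIntegral_union hAB hB
    (integrableOn_one_sub_exp_neg_mul hsupp hA hb) (integrableOn_one_sub_exp_neg_mul hsupp hB' hb)]
  ring

end BranchingMechanism

theorem inverse_strict_inequality_global_general
    (α β : ℝ) (hα : 0 ≤ α) (hβ : 0 ≤ β) (π : Measure ℝ)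
    (hsupp : π (Set.Iic 0) = 0)
    (hint : Integrable (fun θ => min θ (θ ^ 2)) π)
    (r r' : ℝ) (hr : 0 < r) (hrr' : r < r')
    (hππ : 0 < π (Set.Ioo r r')) :
    -- Φ satisfies Assumption H0 with largest root q = 0
    (∃ l : ℝ, 0 < l ∧ 0 < Phi α β π l) ∧
    Phi α β π 0 = 0 ∧ (∀ a : ℝ, 0 < a → Phi α β π a ≠ 0) ∧
    -- the inverses are well-defined on [0,∞)
    (∀ a : ℝ, 0 ≤ a → ∃! b : ℝ, 0 ≤ b ∧ PhiIoi α β π r b = a) ∧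
    (∀ a : ℝ, 0 ≤ a → ∃! b : ℝ, 0 ≤ b ∧ PhiIci α β π r' b = a) ∧
    -- the strict inequality between the inverse values
    (∀ b₁ b₂ : ℝ, 0 ≤ b₁ → PhiIoi α β π r b₁ = (π (Set.Ioi r)).toReal →
      0 ≤ b₂ → PhiIci α β π r' b₂ = (π (Set.Ici r')).toReal → b₂ < b₁) := by
  have : NeZero π := ⟨fun h => by simp [h] at hππ⟩
  have hπIoi : 0 < π (Ioi r) := hππ.trans_le (measure_mono Ioo_subset_Ioi_self)
  have hIoi := measure_Ioi_ne_top_of_integrable_min_sq hint hr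
  have hIoo : π (Ioo r r') ≠ ⊤ := ne_top_of_le_ne_top hIoi (measure_mono Ioo_subset_Ioi_self)
  have hIci : π (Ici r') ≠ ⊤ := ne_top_of_le_ne_top hIoi (measure_mono (Ici_subset_Ioi.2 hrr'))
  have hdisj : Disjoint (Ioo r r') (Ici r') :=
    (Iio_disjoint_Ici le_rfl).mono_left Ioo_subset_Iio_self
  have hPhi_pos : ∀ a, 0 < a → 0 < Phi α β π a := fun a ha => by
    simpa using strictMonoOn_Phi hα hβ hsupp hint self_mem_Ici ha.le ha
  simp only [PhiIoi_eq_truncatedPhi, PhiIci_eq_truncatedPhi]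
  refine ⟨⟨1, one_pos, hPhi_pos 1 one_pos⟩, Phi_zero, fun a ha => (hPhi_pos a ha).ne',
    fun a => existsUnique_truncatedPhi_eq hα hβ hsupp hint hr hπIoi hIoi,
    fun a => existsUnique_truncatedPhi_eq hα hβ hsupp hint hr hπIoi hIci, ?_⟩
  intro b₁ b₂ hb₁ h₁ hb₂ h₂
  refine ((strictMonoOn_truncatedPhi hα hβ hsupp hint hIoi).lt_iff_lt hb₂ hb₁).1 ?_
  rw [h₁, ← Ioo_union_Ici_eq_Ioi hrr',
    truncatedPhi_union hsupp hdisj measurableSet_Ici hIoo hIci hb₂, h₂,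
    measure_union hdisj measurableSet_Ici, ENNReal.toReal_add hIoo hIci, add_comm]
  exact (add_lt_add_iff_right _).2 (setIntegral_one_sub_exp_lt hππ.ne' hIoo
    (integrableOn_one_sub_exp_neg_mul hsupp hIoo hb₂))

/-- Key strict inequality for Theorem 3.8: in the (sub)critical case, if
`π((r,r')) > 0` then `(Φ^{(r,∞)})⁻¹(π((r,∞))) > (Φ^{[r',∞)})⁻¹(π([r',∞)))`. -/
theorem inverse_strict_inequality_global
    (α β : ℝ) (hα : 0 ≤ α) (hβ : 0 ≤ β) (π : Measure ℝ)
    (hsupp : π (Set.Iic 0) = 0) (hσ : SigmaFinite π)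
    (hint : Integrable (fun θ => min θ (θ ^ 2)) π)
    (r r' : ℝ) (hr : 0 < r) (hrr' : r < r')
    (hππ : 0 < π (Set.Ioo r r')) :
    -- Φ satisfies Assumption H0 with largest root q = 0
    (∃ l : ℝ, 0 < l ∧ 0 < Phi α β π l) ∧
    Phi α β π 0 = 0 ∧ (∀ a : ℝ, 0 < a → Phi α β π a ≠ 0) ∧
    -- the inverses are well-defined on [0,∞)
    (∀ a : ℝ, 0 ≤ a → ∃! b : ℝ, 0 ≤ b ∧ PhiIoi α β π r b = a) ∧
    (∀ a : ℝ, 0 ≤ a → ∃! b : ℝ, 0 ≤ b ∧ PhiIci α β π r' b = a) ∧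
    -- the strict inequality between the inverse values
    (∀ b₁ b₂ : ℝ, 0 ≤ b₁ → PhiIoi α β π r b₁ = (π (Set.Ioi r)).toReal →
      0 ≤ b₂ → PhiIci α β π r' b₂ = (π (Set.Ici r')).toReal → b₂ < b₁) :=
  inverse_strict_inequality_global_general α β hα hβ π hsupp hint r r' hr hrr' hππ
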